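/- arXiv:2301.09867 — 4 statements merged into one kernel-verified Lean document; each statement's English description precedes it below -/
import Mathlib

section
/- Let G be a connected graph with at least 2 vertices. Then G has an optimal solvable pebble distribution D (i.e., solvable and of minimum size) such that every vertex v that is not 2-reachable under D satisfies D(v) = 0. -/
/-!
A pebbled vertex `v` that is not 2-reachable holds exactly one pebble, and that pebble is inert:
no pebbling sequence ever moves a pebble off or onto `v`, so every sequence still runs with `v`
emptied. Moving the pebble to a neighbour `u` therefore keeps the size and the reachability of
all vertices other than `v`, while adding one pebble at `u`; so `u` becomes 2-reachable and `v`
is reached by a move from `u`. This removes `v` from the set of pebbled, non-2-reachable vertices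
without creating new ones, and iterating from an optimal distribution empties that set.
-/

open Finset

/-- A single pebbling move: remove two pebbles from `u` and place one on an
adjacent vertex `v`. -/
def PebblingStep {V : Type*} [DecidableEq V] (G : SimpleGraph V) (D D' : V → ℕ) : Prop :=
  ∃ u v, G.Adj u v ∧ 2 ≤ D u ∧
    D' = Function.update (Function.update D u (D u - 2)) v (D v + 1)

/-- `D'` is obtained from `D` by an executable sequence of pebbling moves. -/
def PebblingReaches {V : Type*} [DecidableEq V] (G : SimpleGraph V) : (V → ℕ) → (V → ℕ) → Prop :=
  Relation.ReflTransGen (PebblingStep G)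

/-- A vertex `v` is `k`-reachable under `D`. -/
def KReachable {V : Type*} [DecidableEq V] (G : SimpleGraph V) (D : V → ℕ) (k : ℕ) (v : V) : Prop :=
  ∃ D', PebblingReaches G D D' ∧ k ≤ D' v

/-- A distribution is solvable if every vertex is (1-)reachable. -/
def Solvable {V : Type*} [DecidableEq V] (G : SimpleGraph V) (D : V → ℕ) : Prop :=
  ∀ v, KReachable G D 1 v

/-- The size of a pebble distribution. -/
def distSize {V : Type*} [Fintype V] (D : V → ℕ) : ℕ := ∑ v, D v

/-- The optimal pebbling number `π*`. -/
noncomputable def optPebbling {V : Type*} [Fintype V] [DecidableEq V] (G : SimpleGraph V) : ℕ :=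
  sInf {n | ∃ D : V → ℕ, Solvable G D ∧ distSize D = n}

/-- The `t`-restricted optimal pebbling number `π*_t`. -/
noncomputable def optPebblingRes {V : Type*} [Fintype V] [DecidableEq V]
    (G : SimpleGraph V) (t : ℕ) : ℕ :=
  sInf {n | ∃ D : V → ℕ, (∀ v, D v ≤ t) ∧ Solvable G D ∧ distSize D = n}

section Pebbling

variable {V : Type*} [DecidableEq V] {G : SimpleGraph V} {D : V → ℕ} {u v w : V} {j k : ℕ}

theorem PebblingReaches.add_right {D' : V → ℕ} (h : PebblingReaches G D D') (c : V → ℕ) :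
    PebblingReaches G (D + c) (D' + c) := by
  induction h with
  | refl => exact .refl
  | tail _ hstep ih =>
    obtain ⟨a, b, hab, h2, rfl⟩ := hstep
    refine ih.tail ⟨a, b, hab, le_add_right h2, ?_⟩
    have := G.ne_of_adj hab
    funext x
    simp only [Function.update_apply, Pi.add_apply]
    split_ifs <;> subst_vars <;> omega

theorem kReachable_of_le (h : k ≤ D v) : KReachable G D k v :=
  ⟨D, .refl, h⟩

theorem eq_one_of_not_kReachable_two (hv : ¬KReachable G D 2 v) (h0 : D v ≠ 0) : D v = 1 := by
  have : D v < 2 := lt_of_not_ge fun h => hv (kReachable_of_le h)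
  omega

theorem KReachable.mono (h : KReachable G D k v) (hjk : j ≤ k) : KReachable G D j v :=
  let ⟨D', hr, hk⟩ := h
  ⟨D', hr, hjk.trans hk⟩

/-- A move out of `v` needs two pebbles there and a move into `v` would make it 2-reachable,
so `v` takes part in no move. -/
theorem PebblingReaches.update_zero_of_not_kReachable_two {D' : V → ℕ}
    (hv : ¬KReachable G D 2 v) (h1 : D v = 1) (h : PebblingReaches G D D') :
    D' v = 1 ∧ PebblingReaches G (Function.update D v 0) (Function.update D' v 0) := by
  induction h with
  | refl => exact ⟨h1, .refl⟩
  | @tail B B' hreach hstep ih =>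
    obtain ⟨hBv, hr⟩ := ih
    obtain ⟨a, b, hab, h2, rfl⟩ := hstep
    have hav : a ≠ v := by rintro rfl; omega
    have hbv : b ≠ v := by
      rintro rfl
      refine hv ⟨_, hreach.tail ⟨a, b, hab, h2, rfl⟩, ?_⟩
      simp [hBv]
    refine ⟨by simp [Function.update_of_ne hbv.symm, Function.update_of_ne hav.symm, hBv], ?_⟩
    refine hr.tail ⟨a, b, hab, by simpa [Function.update_of_ne hav], ?_⟩
    have := G.ne_of_adj hab
    funext x
    simp only [Function.update_apply]
    split_ifs <;> subst_vars <;> simp_all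

def movePebble (D : V → ℕ) (v u : V) : V → ℕ :=
  Function.update D v 0 + Pi.single u 1

theorem KReachable.movePebble (hv : ¬KReachable G D 2 v) (h1 : D v = 1) (hwv : w ≠ v)
    (h : KReachable G D k w) :
    KReachable G (movePebble D v u) (k + (Pi.single u 1 : V → ℕ) w) w := by
  obtain ⟨D', hr, hk⟩ := h
  obtain ⟨-, hr'⟩ := hr.update_zero_of_not_kReachable_two hv h1
  refine ⟨_, hr'.add_right (Pi.single u 1), ?_⟩
  simpa [Function.update_of_ne hwv] using hk

theorem Solvable.kReachable_two_movePebble (hs : Solvable G D) (hv : ¬KReachable G D 2 v)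
    (h1 : D v = 1) (huv : u ≠ v) : KReachable G (movePebble D v u) 2 u := by
  simpa using KReachable.movePebble (u := u) hv h1 huv (hs u)

theorem Solvable.movePebble (hs : Solvable G D) (hv : ¬KReachable G D 2 v) (h1 : D v = 1)
    (hvu : G.Adj v u) : Solvable G (movePebble D v u) := by
  intro w
  rcases eq_or_ne w v with rfl | hwv
  · obtain ⟨F, hF, hk⟩ := hs.kReachable_two_movePebble hv h1 hvu.ne.symm
    exact ⟨_, hF.tail ⟨u, w, hvu.symm, hk, rfl⟩, by simp⟩
  · exact (KReachable.movePebble hv h1 hwv (hs w)).mono (Nat.le_add_right 1 _)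

section Finite

variable [Fintype V]

theorem distSize_movePebble (h1 : D v = 1) : distSize (movePebble D v u) = distSize D := by
  have hupd := Finset.sum_update_of_mem (Finset.mem_univ v) D 0
  have hsplit := Finset.add_sum_erase univ D (Finset.mem_univ v)
  simp only [distSize, movePebble, Pi.add_apply, Finset.sum_add_distrib, Finset.sum_pi_single',
    Finset.mem_univ, if_true, hupd, ← Finset.erase_eq] at hsplit ⊢
  omega

open Classical in
noncomputable def pebbledNonTwoReachable (G : SimpleGraph V) (D : V → ℕ) : Finset V :=
  {w | D w ≠ 0 ∧ ¬KReachable G D 2 w}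

theorem pebbledNonTwoReachable_movePebble_subset (hs : Solvable G D)
    (hv : ¬KReachable G D 2 v) (h1 : D v = 1) (huv : u ≠ v) :
    pebbledNonTwoReachable G (movePebble D v u) ⊆ (pebbledNonTwoReachable G D).erase v := by
  intro w hw
  simp only [pebbledNonTwoReachable, mem_erase, mem_filter, mem_univ, true_and] at hw ⊢
  obtain ⟨hw0, hw2⟩ := hw
  have hwv : w ≠ v := by rintro rfl; simp [movePebble, huv] at hw0
  have hwu : w ≠ u := by rintro rfl; exact hw2 (hs.kReachable_two_movePebble hv h1 huv)
  have hEw : movePebble D v u w = D w := by simp [movePebble, hwv, hwu]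
  refine ⟨hwv, hEw ▸ hw0, fun h2 => hw2 ?_⟩
  exact (KReachable.movePebble hv h1 hwv h2).mono le_self_add

theorem card_pebbledNonTwoReachable_movePebble_lt (hs : Solvable G D)
    (hv : ¬KReachable G D 2 v) (h1 : D v = 1) (huv : u ≠ v) :
    #(pebbledNonTwoReachable G (movePebble D v u)) < #(pebbledNonTwoReachable G D) := by
  have hmem : v ∈ pebbledNonTwoReachable G D := by simp [pebbledNonTwoReachable, h1, hv]
  exact (card_le_card (pebbledNonTwoReachable_movePebble_subset hs hv h1 huv)).trans_lt
    (card_erase_lt_of_mem hmem)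

theorem Solvable.exists_distSize_eq_forall_not_kReachable_two_eq_zero
    (hadj : ∀ v, ∃ u, G.Adj v u) (hs : Solvable G D) :
    ∃ E, Solvable G E ∧ distSize E = distSize D ∧
      ∀ v, ¬KReachable G E 2 v → E v = 0 := by
  induction hn : #(pebbledNonTwoReachable G D) using Nat.strong_induction_on
    generalizing D with
  | _ n ih =>
    by_cases hbad : ∃ v, ¬KReachable G D 2 v ∧ D v ≠ 0
    · obtain ⟨v, hv, hv0⟩ := hbad
      have h1 := eq_one_of_not_kReachable_two hv hv0
      obtain ⟨u, hvu⟩ := hadj v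
      have hlt := hn ▸ card_pebbledNonTwoReachable_movePebble_lt hs hv h1 hvu.ne.symm
      obtain ⟨E, hE, hsize, hzero⟩ := ih _ hlt (hs.movePebble hv h1 hvu) rfl
      exact ⟨E, hE, hsize.trans (distSize_movePebble h1), hzero⟩
    · push Not at hbad
      exact ⟨D, hs, rfl, hbad⟩

theorem exists_solvable_distSize_eq_optPebbling (G : SimpleGraph V) :
    ∃ D, Solvable G D ∧ distSize D = optPebbling G :=
  Nat.sInf_mem (s := {n | ∃ D : V → ℕ, Solvable G D ∧ distSize D = n})
    ⟨_, 1, fun _ => kReachable_of_le le_rfl, rfl⟩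

end Finite

end Pebbling

theorem exists_optimal_distribution_no_pebbles_on_non_two_reachable
    {V : Type*} [Fintype V] [DecidableEq V] (G : SimpleGraph V)
    (hconn : G.Connected) (hcard : 2 ≤ Fintype.card V) :
    ∃ D : V → ℕ, Solvable G D ∧ distSize D = optPebbling G ∧
      ∀ v, ¬ KReachable G D 2 v → D v = 0 := by
  have : Nontrivial V := Fintype.one_lt_card_iff_nontrivial.mp hcard
  obtain ⟨D, hs, hsize⟩ := exists_solvable_distSize_eq_optPebbling G
  obtain ⟨E, hE, hsizeE, hzero⟩ := hs.exists_distSize_eq_forall_not_kReachable_two_eq_zero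
    hconn.preconnected.exists_adj_of_nontrivial
  exact ⟨E, hE, hsizeE.trans hsize, hzero⟩
end

section
/- Let G be a graph and D a pebble distribution on G such that D(v) = 3 for some vertex v and D(u) ≤ 1 for all u ≠ v. Then D is not an optimal distribution; i.e., if D is solvable, then there is a solvable distribution of strictly smaller size. -/
/-!
Take one pebble off `v`. Call a distribution sparse if at most one vertex carries more than one
pebble, and that vertex carries at most three. By induction on the move sequence, a vertex that can
receive a pebble from a sparse distribution either already holds one or is joined to the heavy
vertex by a walk whose interior vertices all hold a pebble. Two pebbles on the heavy vertex
suffice to push a pebble along such a walk (shortened to a path), so two pebbles on `v` do the job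
of three.
-/

open Finset

section Sparse

variable {V : Type*} [DecidableEq V] {G : SimpleGraph V}

/-- The bound `3` makes the class closed under pebbling moves: a move leaves at most one pebble on
its source and at most two on its target. -/
def Sparse (E : V → ℕ) : Prop :=
  (∀ x, E x ≤ 3) ∧ ∀ x y, 2 ≤ E x → 2 ≤ E y → x = y

lemma kReachable_one_of_isPath {b u : V} {p : G.Walk b u} (hp : p.IsPath) {E : V → ℕ}
    (hb : 2 ≤ E b) (hint : ∀ y ∈ p.support, y ≠ b → y ≠ u → 1 ≤ E y) :
    KReachable G E 1 u := by
  induction p generalizing E with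
  | nil => exact ⟨E, .refl, by omega⟩
  | @cons b c u hadj q ih =>
    obtain ⟨hq, hbq⟩ := (SimpleGraph.Walk.cons_isPath_iff hadj q).mp hp
    set E₁ := Function.update (Function.update E b (E b - 2)) c (E c + 1) with hE₁
    have hstep : PebblingStep G E E₁ := ⟨b, c, hadj, hb, rfl⟩
    have hE₁c : E₁ c = E c + 1 := by simp [hE₁]
    by_cases hcu : c = u
    · subst hcu
      exact ⟨E₁, .single hstep, by omega⟩
    have hc : 1 ≤ E c := hint c (by simp) hadj.ne.symm hcu
    have hint₁ : ∀ y ∈ q.support, y ≠ c → y ≠ u → 1 ≤ E₁ y := by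
      intro y hy hyc hyu
      have hyb : y ≠ b := fun h => hbq (h ▸ hy)
      simpa [hE₁, hyb, hyc] using hint y (by simp [hy]) hyb hyu
    obtain ⟨E', hreach, hE'⟩ := ih hq (by omega) hint₁
    exact ⟨E', hreach.head hstep, hE'⟩

lemma kReachable_one_of_walk {b u : V} (p : G.Walk b u) {E : V → ℕ}
    (hb : 2 ≤ E b) (hint : ∀ y ∈ p.support, y ≠ b → y ≠ u → 1 ≤ E y) :
    KReachable G E 1 u :=
  kReachable_one_of_isPath p.bypass_isPath hb fun y hy =>
    hint y (p.support_bypass_subset_support hy)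

lemma sparse_of_le_one_of_ne {E : V → ℕ} {w : V} (hw : E w ≤ 3) (h : ∀ x, x ≠ w → E x ≤ 1) :
    Sparse E := by
  have heavy : ∀ x, 2 ≤ E x → x = w := fun x hx => by
    by_contra hxw
    have := h x hxw
    omega
  refine ⟨fun x => ?_, fun x y hx hy => (heavy x hx).trans (heavy y hy).symm⟩
  by_cases hxw : x = w
  · rwa [hxw]
  · have := h x hxw; omega

lemma Sparse.move_apply_le_min {E : V → ℕ} (hE : Sparse E) {b c y : V} (hb : 2 ≤ E b)
    (hyc : y ≠ c) :
    Function.update (Function.update E b (E b - 2)) c (E c + 1) y ≤ min 1 (E y) := by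
  by_cases hyb : y = b
  · subst hyb
    have := hE.1 y
    simp only [Function.update_of_ne hyc, Function.update_self]
    omega
  · have hy : E y ≤ 1 := by
      by_contra h
      exact hyb (hE.2 y b (by omega) hb)
    simp [Function.update_of_ne hyc, Function.update_of_ne hyb, hy]

lemma Sparse.exists_walk_of_reaches {E E' : V → ℕ} (hE : Sparse E)
    (h : PebblingReaches G E E') {u : V} (hu : 1 ≤ E' u) :
    1 ≤ E u ∨ ∃ b, ∃ p : G.Walk b u, 2 ≤ E b ∧ ∀ y ∈ p.support, y ≠ b → y ≠ u → 1 ≤ E y := by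
  induction h using Relation.ReflTransGen.head_induction_on with
  | refl => exact .inl hu
  | @head E E₁ hstep _ ih =>
    obtain ⟨b, c, hadj, hb, rfl⟩ := hstep
    set E₁ := Function.update (Function.update E b (E b - 2)) c (E c + 1) with hE₁
    have hlight : ∀ {y}, y ≠ c → E₁ y ≤ min 1 (E y) := hE.move_apply_le_min hb
    have hc : E c ≤ 1 := by
      by_contra h
      exact hadj.ne (hE.2 b c hb (by omega))
    have hE₁c : E₁ c = E c + 1 := by simp [hE₁]
    have hsparse₁ : Sparse E₁ :=
      sparse_of_le_one_of_ne (by omega) fun x hxc => (hlight hxc).trans (min_le_left _ _)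
    rcases ih hsparse₁ with hu₁ | ⟨b', p, hb', hint⟩
    · by_cases huc : u = c
      · subst huc
        exact .inr ⟨b, .cons hadj .nil, hb, by simp +contextual⟩
      · have := hlight huc
        exact .inl (by omega)
    · obtain rfl : b' = c := by
        by_contra hb'c
        have := hlight hb'c
        omega
      refine .inr ⟨b, .cons hadj p, hb, fun y hy hyb hyu => ?_⟩
      have hy : y ∈ p.support := by simpa [hyb] using hy
      by_cases hyc : y = b'
      · rw [hyc]; omega
      · have := hlight hyc
        have := hint y hy hyc hyu
        omega

end Sparse

theorem three_pebbles_not_optimal {V : Type*} [Fintype V] [DecidableEq V]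
    (G : SimpleGraph V) (D : V → ℕ) (v : V)
    (hv : D v = 3) (hu : ∀ u, u ≠ v → D u ≤ 1) (hsolv : Solvable G D) :
    ∃ D' : V → ℕ, Solvable G D' ∧ distSize D' < distSize D := by
  have hsparse : Sparse D := sparse_of_le_one_of_ne hv.le hu
  refine ⟨Function.update D v 2, fun u => ?_, ?_⟩
  · obtain ⟨E', hreach, hE'u⟩ := hsolv u
    rcases hsparse.exists_walk_of_reaches hreach hE'u with hDu | ⟨b, p, hb, hint⟩
    · refine ⟨_, .refl, ?_⟩
      by_cases huv : u = v <;> simp [huv, hDu]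
    · obtain rfl : b = v := by
        by_contra hbv
        have := hu b hbv
        omega
      exact kReachable_one_of_walk p (by simp) fun y hy hyb hyu => by
        simpa [hyb] using hint y hy hyb hyu
  · refine Finset.sum_lt_sum (fun x _ => ?_) ⟨v, mem_univ v, by simp [hv]⟩
    by_cases hxv : x = v <;> simp [hxv, hv]
end

section
/- For the graph H_m (m ≥ 4 even), placing 2 pebbles on u₁, 2 pebbles on v₁, and 1 pebble on w is a solvable 2-restricted pebble distribution of size 5; hence π*_2(H_m) ≤ 5. -/
open Finset

/-- The base relation for the graph `H_m`.  Vertices `Sum.inl i` are `u_{i+1}`,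
vertices `Sum.inr (Sum.inl i)` are `v_{i+1}`, and `Sum.inr (Sum.inr ())` is `w`
(so 0-based index `i` corresponds to the paper's index `i+1`; the paper's odd
indices are the 0-based even ones). Within each copy of `K_m`, the matching
pairs `{2k, 2k+1}` (0-based) are the removed edges. -/
def HmRel (m : ℕ) : (Fin m ⊕ (Fin m ⊕ Unit)) → (Fin m ⊕ (Fin m ⊕ Unit)) → Prop
  | .inl i, .inl j => i.val / 2 ≠ j.val / 2
  | .inr (.inl i), .inr (.inl j) => i.val / 2 ≠ j.val / 2
  | .inl i, .inr (.inl j) => i = j ∧ i.val % 2 = 1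
  | .inl i, .inr (.inr _) => i.val % 2 = 0
  | .inr (.inl i), .inr (.inr _) => i.val % 2 = 0
  | _, _ => False

/-- The graph `H_m` from the paper. -/
def Hm (m : ℕ) : SimpleGraph (Fin m ⊕ (Fin m ⊕ Unit)) := SimpleGraph.fromRel (HmRel m)

/-- The vertex `w` of `H_m`. -/
def hmW (m : ℕ) : Fin m ⊕ (Fin m ⊕ Unit) := Sum.inr (Sum.inr ())

/-!
The vertex `u₁` is adjacent to every `uᵢ` except its matching partner `u₂`, so its two pebbles
reach all of them in one move, and likewise for `v₁`. To reach `u₂`, send a pebble from `u₁`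
to `u₃` and one from `v₁` to `w`; then `w` holds two pebbles and can send a second one to `u₃`,
which in turn can reach its neighbour `u₂`. Symmetrically for `v₂`.
-/

section Pebbling

variable {V : Type*} [DecidableEq V] {G : SimpleGraph V} {D : V → ℕ}

lemma PebblingReaches.single {a b : V} (hab : G.Adj a b) (ha : 2 ≤ D a) :
    PebblingReaches G D (Function.update (Function.update D a (D a - 2)) b (D b + 1)) :=
  Relation.ReflTransGen.single ⟨a, b, hab, ha, rfl⟩

lemma KReachable.of_le {k : ℕ} {v : V} (h : k ≤ D v) : KReachable G D k v :=
  ⟨D, Relation.ReflTransGen.refl, h⟩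

lemma KReachable.of_reaches {D' : V → ℕ} {k : ℕ} {v : V} (hD : PebblingReaches G D D')
    (h : KReachable G D' k v) : KReachable G D k v :=
  let ⟨D'', hD', hv⟩ := h
  ⟨D'', hD.trans hD', hv⟩

lemma kReachable_one_of_adj {a b : V} (hab : G.Adj a b) (ha : 2 ≤ D a) : KReachable G D 1 b :=
  .of_reaches (.single hab ha) (.of_le (by simp))

lemma KReachable.one_of_adj {x y : V} (hx : KReachable G D 2 x) (hxy : G.Adj x y) :
    KReachable G D 1 y :=
  let ⟨_, hD, hx⟩ := hx
  .of_reaches hD (kReachable_one_of_adj hxy hx)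

/-- Moves `a → x`, `b → w`, `w → x`. -/
lemma kReachable_two_of_relay {a b w x : V} (hax : G.Adj a x) (hbw : G.Adj b w)
    (hwx : G.Adj w x) (ha : 2 ≤ D a) (hb : 2 ≤ D b) (hw : 1 ≤ D w) (hab : a ≠ b) (haw : a ≠ w)
    (hbx : b ≠ x) : KReachable G D 2 x := by
  refine .of_reaches (.single hax ha) (.of_reaches (.single hbw ?_)
    (.of_reaches (.single hwx ?_) (.of_le ?_))) <;>
    simp [hab.symm, haw.symm, hbx, hbx.symm, hwx.ne, hwx.ne.symm, hb, hw]

end Pebbling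

namespace Hm

variable {m : ℕ}

lemma adj_inl_inl {i j : Fin m} : (Hm m).Adj (.inl i) (.inl j) ↔ i.val / 2 ≠ j.val / 2 := by
  simp only [Hm, SimpleGraph.fromRel_adj, HmRel, ne_eq, Sum.inl.injEq]
  constructor
  · rintro ⟨-, h | h⟩ <;> omega
  · intro h
    exact ⟨fun hij => h (hij ▸ rfl), .inl h⟩

lemma adj_inr_inr {i j : Fin m} :
    (Hm m).Adj (.inr (.inl i)) (.inr (.inl j)) ↔ i.val / 2 ≠ j.val / 2 := by
  simp only [Hm, SimpleGraph.fromRel_adj, HmRel, ne_eq, Sum.inr.injEq, Sum.inl.injEq]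
  constructor
  · rintro ⟨-, h | h⟩ <;> omega
  · intro h
    exact ⟨fun hij => h (hij ▸ rfl), .inl h⟩

lemma adj_inl_hmW {i : Fin m} : (Hm m).Adj (.inl i) (hmW m) ↔ i.val % 2 = 0 := by
  simp [Hm, HmRel, hmW]

lemma adj_inr_hmW {i : Fin m} : (Hm m).Adj (.inr (.inl i)) (hmW m) ↔ i.val % 2 = 0 := by
  simp [Hm, HmRel, hmW]

end Hm

def hmDist (m : ℕ) (hm : 0 < m) : Fin m ⊕ (Fin m ⊕ Unit) → ℕ := fun x =>
  if x = .inl ⟨0, hm⟩ then 2 else if x = .inr (.inl ⟨0, hm⟩) then 2 else if x = hmW m then 1 else 0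

lemma solvable_hmDist {m : ℕ} (hm : 2 < m) : Solvable (Hm m) (hmDist m (by omega)) := by
  have hw : hmDist m (by omega) (hmW m) = 1 := by simp [hmDist, hmW]
  rintro (i | i | ⟨⟩)
  · obtain hi | hi | hi : i.val = 0 ∨ i.val = 1 ∨ 2 ≤ i.val := by omega
    · exact .of_le (by simp [hmDist, Fin.ext_iff, hi])
    · refine (kReachable_two_of_relay (a := .inl ⟨0, by omega⟩) (b := .inr (.inl ⟨0, by omega⟩))
        (x := .inl ⟨2, hm⟩) (Hm.adj_inl_inl.mpr (by simp)) (Hm.adj_inr_hmW.mpr (by simp))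
        (Hm.adj_inl_hmW.mpr (by simp)).symm (by simp [hmDist]) (by simp [hmDist]) hw.ge
        (by simp) (by simp [hmW]) (by simp)).one_of_adj ?_
      exact Hm.adj_inl_inl.mpr (by simp [hi])
    · exact kReachable_one_of_adj (a := .inl ⟨0, by omega⟩) (Hm.adj_inl_inl.mpr (by simp; omega))
        (by simp [hmDist])
  · obtain hi | hi | hi : i.val = 0 ∨ i.val = 1 ∨ 2 ≤ i.val := by omega
    · exact .of_le (by simp [hmDist, Fin.ext_iff, hi])
    · refine (kReachable_two_of_relay (a := .inr (.inl ⟨0, by omega⟩)) (b := .inl ⟨0, by omega⟩)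
        (x := .inr (.inl ⟨2, hm⟩)) (Hm.adj_inr_inr.mpr (by simp)) (Hm.adj_inl_hmW.mpr (by simp))
        (Hm.adj_inr_hmW.mpr (by simp)).symm (by simp [hmDist]) (by simp [hmDist]) hw.ge
        (by simp) (by simp [hmW]) (by simp)).one_of_adj ?_
      exact Hm.adj_inr_inr.mpr (by simp [hi])
    · exact kReachable_one_of_adj (a := .inr (.inl ⟨0, by omega⟩))
        (Hm.adj_inr_inr.mpr (by simp; omega)) (by simp [hmDist])
  · exact .of_le hw.ge

lemma hmDist_le_two {m : ℕ} (hm : 0 < m) (x : Fin m ⊕ (Fin m ⊕ Unit)) : hmDist m hm x ≤ 2 := by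
  unfold hmDist
  split_ifs <;> omega

lemma distSize_hmDist {m : ℕ} (hm : 0 < m) : distSize (hmDist m hm) = 5 := by
  simp [distSize, hmDist, hmW, Fintype.sum_sum_type, Finset.sum_ite_eq']

lemma optPebblingRes_le_distSize {V : Type*} [Fintype V] [DecidableEq V] {G : SimpleGraph V}
    {t : ℕ} {D : V → ℕ} (hD : ∀ v, D v ≤ t) (hs : Solvable G D) :
    optPebblingRes G t ≤ distSize D :=
  Nat.sInf_le ⟨D, hD, hs, rfl⟩

theorem Hm_restricted_le_five (m : ℕ) (hm : 4 ≤ m) :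
    Solvable (Hm m) (fun x =>
      if x = Sum.inl (⟨0, by omega⟩ : Fin m) then 2
      else if x = Sum.inr (Sum.inl (⟨0, by omega⟩ : Fin m)) then 2
      else if x = hmW m then 1 else 0) ∧
    (∀ x, (fun x =>
      if x = Sum.inl (⟨0, by omega⟩ : Fin m) then 2
      else if x = Sum.inr (Sum.inl (⟨0, by omega⟩ : Fin m)) then 2
      else if x = hmW m then 1 else 0) x ≤ 2) ∧
    distSize (fun x =>
      if x = Sum.inl (⟨0, by omega⟩ : Fin m) then 2
      else if x = Sum.inr (Sum.inl (⟨0, by omega⟩ : Fin m)) then 2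
      else if x = hmW m then 1 else 0) = 5 ∧
    optPebblingRes (Hm m) 2 ≤ 5 := by
  have hs := solvable_hmDist (m := m) (by omega)
  have hle := hmDist_le_two (m := m) (by omega)
  have hsize := distSize_hmDist (m := m) (by omega)
  exact ⟨hs, hle, hsize, hsize ▸ optPebblingRes_le_distSize hle hs⟩
end

section
/- For the graph H_m (m ≥ 4 even), π*(H_m) = 4. In particular, every vertex of H_m is within distance 2 of w, so 4 pebbles on w form a solvable distribution, and no solvable distribution of size at most 3 exists. -/
open Finset

/-!
Four pebbles on `w` suffice because every vertex is within distance two of `w`.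
Conversely, take a solvable distribution of at most three pebbles. If no vertex carries two
pebbles, no move is possible, so all `2m + 1` vertices would have to be occupied. Otherwise the
pebbles sit on at most two vertices `x, y`, and in `H_m` (`m ≥ 4` even) no two closed
neighbourhoods cover the graph: some `t` is neither equal nor adjacent to `x` or `y`. Weighting
`t` by 4, its neighbours by 2 and all other vertices by 1, a pebbling move never increases the
weighted pebble count; it starts at most 3 but must reach at least 4 once `t` holds a pebble.
-/

lemma exists_eq_zero_of_distSize_lt_card {V : Type*} [Fintype V] {D : V → ℕ}
    (h : distSize D < Fintype.card V) : ∃ t, D t = 0 := by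
  by_contra! hpos
  have : Fintype.card V ≤ distSize D := by
    simpa [distSize] using
      card_nsmul_le_sum univ D 1 fun x _ => Nat.one_le_iff_ne_zero.mpr (hpos x)
  omega

section Pebbling

variable {V : Type*} [DecidableEq V] {G : SimpleGraph V}

lemma PebblingStep.weight_le [Fintype V] {c : V → ℕ} (hc : ∀ u v, G.Adj u v → c v ≤ 2 * c u)
    {D D' : V → ℕ} (h : PebblingStep G D D') : ∑ x, D' x * c x ≤ ∑ x, D x * c x := by
  obtain ⟨u, v, huv, hu, rfl⟩ := h
  have key : ∀ x, Function.update (Function.update D u (D u - 2)) v (D v + 1) x * c x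
      + (if x = u then 2 * c u else 0) = D x * c x + (if x = v then c v else 0) := by
    intro x
    rcases eq_or_ne x v with rfl | hxv
    · simp [huv.ne.symm, add_mul]
    rcases eq_or_ne x u with rfl | hxu
    · simp [hxv, ← add_mul, Nat.sub_add_cancel hu]
    · simp [hxu, hxv]
  have hsum := Finset.sum_congr rfl (fun x (_ : x ∈ univ) => key x)
  simp only [sum_add_distrib, sum_ite_eq', mem_univ, if_true] at hsum
  linarith [hc u v huv]

lemma PebblingReaches.weight_le [Fintype V] {c : V → ℕ}
    (hc : ∀ u v, G.Adj u v → c v ≤ 2 * c u) {D D' : V → ℕ} (h : PebblingReaches G D D') :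
    ∑ x, D' x * c x ≤ ∑ x, D x * c x := by
  induction h with
  | refl => exact le_rfl
  | tail _ hstep ih => exact (hstep.weight_le hc).trans ih

lemma PebblingReaches.eq_of_forall_le_one {D D' : V → ℕ} (hD : ∀ v, D v ≤ 1)
    (h : PebblingReaches G D D') : D' = D := by
  rcases h.cases_head with rfl | ⟨_, ⟨u, _, _, hu, _⟩, _⟩
  · rfl
  · exact absurd (hD u) (by omega)

lemma PebblingReaches.move {D : V → ℕ} {u v : V} (huv : G.Adj u v) {n : ℕ} (hn : 2 * n ≤ D u) :
    PebblingReaches G D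
      (Function.update (Function.update D u (D u - 2 * n)) v (D v + n)) := by
  induction n with
  | zero => simp [PebblingReaches, Relation.ReflTransGen.refl]
  | succ n ih =>
    refine (ih (by omega)).tail ⟨u, v, huv, by simp [huv.ne]; omega, ?_⟩
    funext x
    rcases eq_or_ne x v with rfl | hxv
    · simp; omega
    rcases eq_or_ne x u with rfl | hxu
    · simp [hxv]; omega
    · simp [hxu, hxv]

lemma kReachable_of_walk {r t : V} (p : G.Walk r t) {D : V → ℕ} {k : ℕ}
    (h : 2 ^ p.length * k ≤ D r) : KReachable G D k t := by
  induction p generalizing D with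
  | nil => exact ⟨D, .refl, by simpa using h⟩
  | @cons r s t hrs p ih =>
    have hmove := PebblingReaches.move (D := D) hrs (n := 2 ^ p.length * k)
      (by rw [SimpleGraph.Walk.length_cons, pow_succ] at h; linarith)
    obtain ⟨D', hreach, hk⟩ := ih (D := Function.update
      (Function.update D r (D r - 2 * (2 ^ p.length * k))) s (D s + 2 ^ p.length * k)) (by simp)
    exact ⟨D', hmove.trans hreach, hk⟩

lemma solvable_of_forall_walk_length_le {r : V} {k : ℕ}
    (h : ∀ x, ∃ p : G.Walk r x, p.length ≤ k) :
    Solvable G (fun x => if x = r then 2 ^ k else 0) := fun x => by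
  obtain ⟨p, hp⟩ := h x
  exact kReachable_of_walk p (by simpa using Nat.pow_le_pow_right two_pos hp)

variable [Fintype V]

lemma not_kReachable_of_closedNbhd_eq_zero {D : V → ℕ} {t : V} (hsize : distSize D ≤ 3)
    (hzero : ∀ z, z = t ∨ G.Adj t z → D z = 0) : ¬ KReachable G D 1 t := by
  rintro ⟨D', hreach, ht⟩
  classical
  let c : V → ℕ := fun v => if v = t then 4 else if G.Adj t v then 2 else 1
  have hc_pos : ∀ z, 1 ≤ c z := fun z => by dsimp only [c]; split_ifs <;> omega
  have hc : ∀ u v, G.Adj u v → c v ≤ 2 * c u := by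
    intro u v huv
    by_cases hvt : v = t
    · subst hvt
      simp [c, huv.ne, huv.symm]
    · have : c v ≤ 2 := by dsimp only [c]; split_ifs <;> omega
      linarith [hc_pos u]
  have hfinal : 4 ≤ ∑ x, D' x * c x :=
    calc 4 ≤ D' t * c t := by simpa [c] using ht
      _ ≤ ∑ x, D' x * c x :=
        single_le_sum (f := fun x => D' x * c x) (fun x _ => Nat.zero_le _) (mem_univ t)
  have hinit : ∑ x, D x * c x = distSize D := by
    refine sum_congr rfl fun x _ => ?_
    by_cases hx : x = t ∨ G.Adj t x
    · simp [hzero x hx]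
    · simp_all [c]
  linarith [hreach.weight_le hc]

lemma exists_forall_eq_zero_of_le_distSize {D : V → ℕ} {x : V} (hx : 2 ≤ D x)
    (hsize : distSize D ≤ 3) : ∃ y, ∀ z, z ≠ x → z ≠ y → D z = 0 := by
  by_contra! h
  obtain ⟨y, hyx, -, hy⟩ := h x
  obtain ⟨z, hzx, hzy, hz⟩ := h y
  have : D x + D y + D z ≤ distSize D := by
    simpa [distSize, sum_insert, hyx.symm, hzx.symm, hzy.symm, add_assoc] using
      sum_le_sum_of_subset (f := D) (subset_univ {x, y, z})
  omega

theorem not_solvable_of_distSize_le_three (hcard : 3 < Fintype.card V)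
    (hnodom : ∀ x y : V, ∃ t, t ≠ x ∧ t ≠ y ∧ ¬ G.Adj t x ∧ ¬ G.Adj t y)
    {D : V → ℕ} (hsize : distSize D ≤ 3) : ¬ Solvable G D := by
  intro hsolv
  by_cases hbig : ∃ x, 2 ≤ D x
  · obtain ⟨x, hx⟩ := hbig
    obtain ⟨y, hy⟩ := exists_forall_eq_zero_of_le_distSize hx hsize
    obtain ⟨t, htx, hty, hax, hay⟩ := hnodom x y
    refine not_kReachable_of_closedNbhd_eq_zero hsize (fun z hz => hy z ?_ ?_) (hsolv t)
    · rintro rfl; rcases hz with rfl | h; exacts [htx rfl, hax h]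
    · rintro rfl; rcases hz with rfl | h; exacts [hty rfl, hay h]
  · push Not at hbig
    obtain ⟨t, ht⟩ := exists_eq_zero_of_distSize_lt_card (D := D) (by omega)
    obtain ⟨D', hreach, hD't⟩ := hsolv t
    rw [hreach.eq_of_forall_le_one (fun v => by linarith [hbig v])] at hD't
    omega

end Pebbling

section Hm

variable {m : ℕ}

@[simp] lemma Hm_adj_inl_inl (i j : Fin m) :
    (Hm m).Adj (.inl i) (.inl j) ↔ i.val / 2 ≠ j.val / 2 := by
  simp only [Hm, SimpleGraph.fromRel_adj, HmRel]; grind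

@[simp] lemma Hm_adj_inr_inr (i j : Fin m) :
    (Hm m).Adj (.inr (.inl i)) (.inr (.inl j)) ↔ i.val / 2 ≠ j.val / 2 := by
  simp only [Hm, SimpleGraph.fromRel_adj, HmRel]; grind

@[simp] lemma Hm_adj_inl_inr (i j : Fin m) :
    (Hm m).Adj (.inl i) (.inr (.inl j)) ↔ i = j ∧ i.val % 2 = 1 := by
  simp [Hm, HmRel]

@[simp] lemma Hm_adj_inr_inl (i j : Fin m) :
    (Hm m).Adj (.inr (.inl i)) (.inl j) ↔ i = j ∧ i.val % 2 = 1 := by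
  rw [SimpleGraph.adj_comm, Hm_adj_inl_inr]; grind

@[simp] lemma Hm_adj_inl_hmW (i : Fin m) : (Hm m).Adj (.inl i) (hmW m) ↔ i.val % 2 = 0 := by
  simp [Hm, HmRel, hmW]

@[simp] lemma Hm_adj_inr_hmW (i : Fin m) :
    (Hm m).Adj (.inr (.inl i)) (hmW m) ↔ i.val % 2 = 0 := by
  simp [Hm, HmRel, hmW]

@[simp] lemma Hm_adj_hmW_inl (i : Fin m) : (Hm m).Adj (hmW m) (.inl i) ↔ i.val % 2 = 0 := by
  rw [SimpleGraph.adj_comm, Hm_adj_inl_hmW]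

@[simp] lemma Hm_adj_hmW_inr (i : Fin m) :
    (Hm m).Adj (hmW m) (.inr (.inl i)) ↔ i.val % 2 = 0 := by
  rw [SimpleGraph.adj_comm, Hm_adj_inr_hmW]

lemma Hm_vertex_cases (x : Fin m ⊕ (Fin m ⊕ Unit)) :
    (∃ i, x = .inl i) ∨ (∃ i, x = .inr (.inl i)) ∨ x = hmW m := by
  rcases x with i | i | ⟨⟨⟩⟩
  exacts [.inl ⟨i, rfl⟩, .inr (.inl ⟨i, rfl⟩), .inr (.inr rfl)]

lemma exists_even_div_two_ne (hm : 4 ≤ m) (i : Fin m) :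
    ∃ k : Fin m, k.val % 2 = 0 ∧ k.val / 2 ≠ i.val / 2 :=
  if hi : i.val < 2 then ⟨⟨2, by omega⟩, by simp, by simp; omega⟩
  else ⟨⟨0, by omega⟩, by simp, by simp; omega⟩

lemma Hm_exists_walk_hmW (hm : 4 ≤ m) (x : Fin m ⊕ (Fin m ⊕ Unit)) :
    ∃ p : (Hm m).Walk (hmW m) x, p.length ≤ 2 := by
  rcases Hm_vertex_cases x with ⟨i, rfl⟩ | ⟨i, rfl⟩ | rfl
  · rcases Nat.mod_two_eq_zero_or_one i with h | h
    · exact ⟨((Hm_adj_hmW_inl i).2 h).toWalk, by simp⟩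
    · obtain ⟨k, hk, hki⟩ := exists_even_div_two_ne hm i
      exact ⟨.cons ((Hm_adj_hmW_inl k).2 hk) ((Hm_adj_inl_inl k i).2 hki).toWalk, by simp⟩
  · rcases Nat.mod_two_eq_zero_or_one i with h | h
    · exact ⟨((Hm_adj_hmW_inr i).2 h).toWalk, by simp⟩
    · obtain ⟨k, hk, hki⟩ := exists_even_div_two_ne hm i
      exact ⟨.cons ((Hm_adj_hmW_inr k).2 hk) ((Hm_adj_inr_inr k i).2 hki).toWalk, by simp⟩
  · exact ⟨.nil, by simp⟩

lemma exists_odd_ne (hm : 4 ≤ m) (i : Fin m) : ∃ k : Fin m, k.val % 2 = 1 ∧ k ≠ i :=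
  if hi : i.val = 1 then ⟨⟨3, by omega⟩, by simp, by simp [Fin.ext_iff]; omega⟩
  else ⟨⟨1, by omega⟩, by simp, by simp [Fin.ext_iff]; omega⟩

lemma Hm_exists_nonadj_pair (hm : 4 ≤ m) (heven : Even m) (x y : Fin m ⊕ (Fin m ⊕ Unit)) :
    ∃ t, t ≠ x ∧ t ≠ y ∧ ¬ (Hm m).Adj t x ∧ ¬ (Hm m).Adj t y := by
  have hm2 : m % 2 = 0 := Nat.even_iff.mp heven
  have huv (i j : Fin m) : ∃ t, t ≠ .inl i ∧ t ≠ .inr (.inl j) ∧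
      ¬ (Hm m).Adj t (.inl i) ∧ ¬ (Hm m).Adj t (.inr (.inl j)) := by
    -- `t` is the partner of `u_i` or of `v_j` in its removed matching edge, or `w`
    rcases Nat.mod_two_eq_zero_or_one i with hi | hi <;>
      rcases Nat.mod_two_eq_zero_or_one j with hj | hj
    · exact ⟨.inl ⟨i + 1, by omega⟩, by simp [Fin.ext_iff], by simp, by simp; omega,
        by simp [Fin.ext_iff]; omega⟩
    · exact ⟨.inr (.inl ⟨j - 1, by omega⟩), by simp, by simp [Fin.ext_iff]; omega,
        by simp [Fin.ext_iff]; omega, by simp; omega⟩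
    · exact ⟨.inl ⟨i - 1, by omega⟩, by simp [Fin.ext_iff]; omega, by simp, by simp; omega,
        by simp [Fin.ext_iff]; omega⟩
    · exact ⟨hmW m, by simp [hmW], by simp [hmW], by simp [hi], by simp [hj]⟩
  have huw (i : Fin m) : ∃ t, t ≠ .inl i ∧ t ≠ hmW m ∧
      ¬ (Hm m).Adj t (.inl i) ∧ ¬ (Hm m).Adj t (hmW m) := by
    obtain ⟨k, hk, hki⟩ := exists_odd_ne hm i
    exact ⟨.inr (.inl k), by simp, by simp [hmW], by simp [hki], by simp [hk]⟩
  have hvw (i : Fin m) : ∃ t, t ≠ .inr (.inl i) ∧ t ≠ hmW m ∧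
      ¬ (Hm m).Adj t (.inr (.inl i)) ∧ ¬ (Hm m).Adj t (hmW m) := by
    obtain ⟨k, hk, hki⟩ := exists_odd_ne hm i
    exact ⟨.inl k, by simp, by simp [hmW], by simp [hki], by simp [hk]⟩
  have swap {x y : Fin m ⊕ (Fin m ⊕ Unit)}
      (h : ∃ t, t ≠ x ∧ t ≠ y ∧ ¬ (Hm m).Adj t x ∧ ¬ (Hm m).Adj t y) :
      ∃ t, t ≠ y ∧ t ≠ x ∧ ¬ (Hm m).Adj t y ∧ ¬ (Hm m).Adj t x :=
    h.imp fun _ ⟨h₁, h₂, h₃, h₄⟩ => ⟨h₂, h₁, h₄, h₃⟩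
  rcases Hm_vertex_cases x with ⟨i, rfl⟩ | ⟨i, rfl⟩ | rfl <;>
    rcases Hm_vertex_cases y with ⟨j, rfl⟩ | ⟨j, rfl⟩ | rfl
  · exact ⟨.inr (.inl ⟨0, by omega⟩), by simp, by simp, by simp, by simp⟩
  · exact huv i j
  · exact huw i
  · exact swap (huv j i)
  · exact ⟨.inl ⟨0, by omega⟩, by simp, by simp, by simp, by simp⟩
  · exact hvw i
  · exact swap (huw j)
  · exact swap (hvw j)
  · exact ⟨.inl ⟨1, by omega⟩, by simp [hmW], by simp [hmW], by simp, by simp⟩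

end Hm

theorem Hm_optPebbling_eq_four (m : ℕ) (hm : 4 ≤ m) (heven : Even m) :
    optPebbling (Hm m) = 4 ∧
    (∀ x, (Hm m).dist (hmW m) x ≤ 2) ∧
    Solvable (Hm m) (fun x => if x = hmW m then 4 else 0) ∧
    ¬ ∃ D : (Fin m ⊕ (Fin m ⊕ Unit)) → ℕ, Solvable (Hm m) D ∧ distSize D ≤ 3 := by
  have hdist (x : Fin m ⊕ (Fin m ⊕ Unit)) : (Hm m).dist (hmW m) x ≤ 2 :=
    have ⟨p, hp⟩ := Hm_exists_walk_hmW hm x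
    (SimpleGraph.dist_le p).trans hp
  have hsolv : Solvable (Hm m) (fun x => if x = hmW m then 4 else 0) :=
    solvable_of_forall_walk_length_le (k := 2) (Hm_exists_walk_hmW hm)
  have hsmall : ¬ ∃ D : (Fin m ⊕ (Fin m ⊕ Unit)) → ℕ, Solvable (Hm m) D ∧ distSize D ≤ 3 :=
    fun ⟨D, hD, hsize⟩ => not_solvable_of_distSize_le_three (by simp; omega)
      (Hm_exists_nonadj_pair hm heven) hsize hD
  refine ⟨IsLeast.csInf_eq ⟨⟨_, hsolv, by simp [distSize]⟩, ?_⟩, hdist, hsolv, hsmall⟩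
  rintro n ⟨D, hD, rfl⟩
  by_contra! h
  exact hsmall ⟨D, hD, by omega⟩
end
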